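/- arXiv:1802.06052 — 2 statements merged into one kernel-verified Lean document; each statement's English description precedes it below -/
import Mathlib

section
/- Let f : X → ℝ be differentiable, monotone, and DR-submodular on a box X ⊆ ℝ₊ⁿ. Then for any x, y ∈ X, f(y ∨ x) - f(x) ≤ ⟨∇f(x), (y - x) ∨ 0⟩, where ∨ denotes componentwise maximum. -/
open RealInnerProductSpace

/-!
Along the segment from `x` to `z ≥ x`, the mean value theorem writes `f z - f x` as
`⟪∇f(w), z - x⟫` for some `w` with `x ≤ w`. DR-submodularity gives `∇f(w) ≤ ∇f(x)` coordinatewise,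
and `z - x ≥ 0`, so this is at most `⟪∇f(x), z - x⟫`. Apply it to `z = y ∨ x`, for which
`z - x = (y - x) ∨ 0` and which stays in the box.
-/

theorem exists_mem_Ioo_sub_eq_inner_gradient {E : Type*} [NormedAddCommGroup E]
    [InnerProductSpace ℝ E] [CompleteSpace E] {f : E → ℝ} (hf : Differentiable ℝ f) (x v : E) :
    ∃ c ∈ Set.Ioo (0 : ℝ) 1, f (x + v) - f x = ⟪gradient f (x + c • v), v⟫ := by
  have hderiv (t : ℝ) :
      HasDerivAt (fun t : ℝ => f (x + t • v)) ⟪gradient f (x + t • v), v⟫ t := by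
    have hline : HasDerivAt (fun t : ℝ => x + t • v) v t := by
      simpa using ((hasDerivAt_id t).smul_const v).const_add x
    exact (hf _).hasGradientAt.hasFDerivAt.comp_hasDerivAt t hline
  obtain ⟨c, hc, hslope⟩ := exists_hasDerivAt_eq_slope _ _ one_pos
    (fun t _ => (hderiv t).continuousAt.continuousWithinAt) (fun t _ => hderiv t)
  exact ⟨c, hc, by simpa using hslope.symm⟩

theorem EuclideanSpace.inner_le_inner_of_le_of_nonneg {ι : Type*} [Fintype ι]
    {g h v : EuclideanSpace ℝ ι} (hgh : ∀ i, g i ≤ h i) (hv : ∀ i, 0 ≤ v i) : ⟪g, v⟫ ≤ ⟪h, v⟫ := by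
  simp only [PiLp.inner_apply, RCLike.inner_apply, starRingEnd_apply, star_trivial]
  exact Finset.sum_le_sum fun i _ => mul_le_mul_of_nonneg_left (hgh i) (hv i)

theorem EuclideanSpace.convex_setOf_forall_apply_mem {ι : Type*} {S : ι → Set ℝ}
    (hS : ∀ i, Convex ℝ (S i)) : Convex ℝ {y : EuclideanSpace ℝ ι | ∀ i, y i ∈ S i} := by
  intro x hx y hy a b ha hb hab i
  simpa using hS i (hx i) (hy i) ha hb hab

theorem EuclideanSpace.toLp_max_sub_zero {ι : Type*} (x y : EuclideanSpace ℝ ι) :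
    (WithLp.toLp 2 (fun i => max (y i - x i) 0) : EuclideanSpace ℝ ι) =
      WithLp.toLp 2 (fun i => max (y i) (x i)) - x := by
  ext i
  simp [← max_sub_sub_right]

theorem sub_le_inner_gradient_of_le {ι : Type*} [Fintype ι]
    {s : Set (EuclideanSpace ℝ ι)} (hs : Convex ℝ s)
    {f : EuclideanSpace ℝ ι → ℝ} (hf : Differentiable ℝ f)
    (hDR : ∀ x ∈ s, ∀ y ∈ s, (∀ i, x i ≤ y i) → ∀ i, gradient f y i ≤ gradient f x i)
    {x z : EuclideanSpace ℝ ι} (hx : x ∈ s) (hz : z ∈ s) (hxz : ∀ i, x i ≤ z i) :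
    f z - f x ≤ ⟪gradient f x, z - x⟫ := by
  obtain ⟨c, hc, hmvt⟩ := exists_mem_Ioo_sub_eq_inner_gradient hf x (z - x)
  rw [add_sub_cancel] at hmvt
  have hdir (i : ι) : 0 ≤ (z - x) i := by simpa using hxz i
  have hxw (i : ι) : x i ≤ (x + c • (z - x)) i := by
    simpa using mul_nonneg hc.1.le (hdir i)
  have hw : x + c • (z - x) ∈ s := hs.add_smul_sub_mem hx hz ⟨hc.1.le, hc.2.le⟩
  rw [hmvt]
  exact EuclideanSpace.inner_le_inner_of_le_of_nonneg (hDR x hx _ hw hxw) hdir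

theorem drSubmodular_sup_inequality_general
    {n : ℕ} (b : EuclideanSpace ℝ (Fin n))
    (X : Set (EuclideanSpace ℝ (Fin n)))
    (hX : X = {y : EuclideanSpace ℝ (Fin n) | ∀ i, y i ∈ Set.Icc 0 (b i)})
    (f : EuclideanSpace ℝ (Fin n) → ℝ)
    (hf : Differentiable ℝ f)
    (hDR : ∀ x ∈ X, ∀ y ∈ X, (∀ i, x i ≤ y i) →
      ∀ i, gradient f y i ≤ gradient f x i) :
    ∀ x ∈ X, ∀ y ∈ X,
      f ((WithLp.toLp 2 (fun i => max (y i) (x i)) : EuclideanSpace ℝ (Fin n))) - f x ≤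
        ⟪gradient f x, (WithLp.toLp 2 (fun i => max (y i - x i) 0) : EuclideanSpace ℝ (Fin n))⟫ := by
  intro x hx y hy
  subst hX
  have hconvex := EuclideanSpace.convex_setOf_forall_apply_mem fun i => convex_Icc 0 (b i)
  have hsup : (WithLp.toLp 2 (fun i => max (y i) (x i)) : EuclideanSpace ℝ (Fin n)) ∈
      {y : EuclideanSpace ℝ (Fin n) | ∀ i, y i ∈ Set.Icc 0 (b i)} := fun i =>
    ⟨le_max_of_le_right (hx i).1, max_le (hy i).2 (hx i).2⟩
  rw [EuclideanSpace.toLp_max_sub_zero]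
  exact sub_le_inner_gradient_of_le hconvex hf hDR hx hsup fun i => le_max_right _ _

/-- For monotone DR-submodular `f`: `f(y ∨ x) - f(x) ≤ ⟨∇f(x), (y - x) ∨ 0⟩`. -/
theorem drSubmodular_sup_inequality
    {n : ℕ} (b : EuclideanSpace ℝ (Fin n)) (hb : ∀ i, 0 ≤ b i)
    (X : Set (EuclideanSpace ℝ (Fin n)))
    (hX : X = {y : EuclideanSpace ℝ (Fin n) | ∀ i, y i ∈ Set.Icc 0 (b i)})
    (f : EuclideanSpace ℝ (Fin n) → ℝ)
    (hf : Differentiable ℝ f)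
    (hmono : ∀ x ∈ X, ∀ y ∈ X, (∀ i, x i ≤ y i) → f x ≤ f y)
    (hDR : ∀ x ∈ X, ∀ y ∈ X, (∀ i, x i ≤ y i) →
      ∀ i, gradient f y i ≤ gradient f x i) :
    ∀ x ∈ X, ∀ y ∈ X,
      f ((WithLp.toLp 2 (fun i => max (y i) (x i)) : EuclideanSpace ℝ (Fin n))) - f x ≤
        ⟪gradient f x, (WithLp.toLp 2 (fun i => max (y i - x i) 0) : EuclideanSpace ℝ (Fin n))⟫ :=
  drSubmodular_sup_inequality_general b X hX f hf hDR
end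

section
/- Online gradient ascent regret bound for weakly DR-submodular functions: Let f₁,…,f_T : X → ℝ₊ be differentiable, monotone, γ-weakly DR-submodular on a box X ⊇ P, where P ⊆ X is a closed convex set with diameter D, and suppose ‖∇f_t(x)‖ ≤ G for all t and x ∈ P. If x₁ ∈ P and x_{t+1} = Π_P(x_t + η_t ∇f_t(x_t)) with η_t = D/(G√t), then (γ²/(γ²+1)) Σ_{t=1}^T f_t(x*) - Σ_{t=1}^T f_t(x_t) ≤ 3γDG√T / (2(γ²+1)), where x* = argmax_{x ∈ P} Σ_t f_t(x). -/
/-!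
For a monotone, nonnegative, `γ`-weakly DR-submodular `f` on a box, the mean value theorem on the
segments `[x, x ⊔ y]` and `[x ⊓ y, x]` (along which the gradient is comparable, up to `γ`, with the
gradient at the respective endpoint `x`) yields
`γ² f(y) - (γ² + 1) f(x) ≤ γ ⟪∇f(x), y - x⟫`.
Taking `x = x_t`, `y = x*` and summing over `t` reduces the regret bound to the classical one,
`∑ ⟪g_t, x* - x_t⟫ ≤ (3/2) D G √T`, for projected online gradient ascent against the linear rewards
`⟪g_t, ·⟫` with step sizes `D / (G √t)`: the projection does not increase distances to `x*`, and
the resulting per-step bounds telescope.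
-/

open Finset
open scoped InnerProductSpace

theorem exists_mem_segment_sub_eq_inner_gradient {E : Type*} [NormedAddCommGroup E]
    [InnerProductSpace ℝ E] [CompleteSpace E] {f : E → ℝ} (hf : Differentiable ℝ f) (x y : E) :
    ∃ z ∈ segment ℝ x y, f y - f x = ⟪gradient f z, y - x⟫_ℝ := by
  simpa using domain_mvt (fun z _ => (hf z).hasFDerivAt.hasFDerivWithinAt) convex_univ
    (Set.mem_univ x) (Set.mem_univ y)

namespace EuclideanSpace

theorem apply_mem_Icc_of_mem_segment {ι : Type*} {x y z : EuclideanSpace ℝ ι}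
    (hz : z ∈ segment ℝ x y) {i : ι} (hxy : x i ≤ y i) : z i ∈ Set.Icc (x i) (y i) := by
  obtain ⟨a, c, ha, hc, hac, rfl⟩ := hz
  obtain rfl : a = 1 - c := by linarith
  simp only [PiLp.add_apply, PiLp.smul_apply, smul_eq_mul]
  constructor <;> nlinarith

theorem mul_inner_le_inner_of_forall_mul_le {ι : Type*} [Fintype ι] {γ : ℝ}
    {u v w : EuclideanSpace ℝ ι} (huv : ∀ i, γ * u i ≤ v i) (hw : ∀ i, 0 ≤ w i) :
    γ * ⟪u, w⟫_ℝ ≤ ⟪v, w⟫_ℝ := by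
  simp only [PiLp.inner_apply, RCLike.inner_apply, conj_trivial, mul_sum]
  exact sum_le_sum fun i _ => by nlinarith [mul_le_mul_of_nonneg_left (huv i) (hw i)]

end EuclideanSpace

section NonnegBox

variable {ι : Type*} (b : EuclideanSpace ℝ ι)

def nonnegBox : Set (EuclideanSpace ℝ ι) :=
  {y | ∀ i, y i ∈ Set.Icc 0 (b i)}

theorem nonnegBox_eq_preimage : nonnegBox b = WithLp.ofLp ⁻¹' Set.Icc 0 b.ofLp := by
  ext y
  simp [nonnegBox, Pi.le_def, forall_and]

theorem convex_nonnegBox : Convex ℝ (nonnegBox b) := by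
  rw [nonnegBox_eq_preimage]
  exact (convex_Icc _ _).linear_preimage (WithLp.linearEquiv 2 ℝ (ι → ℝ)).toLinearMap

theorem isBounded_nonnegBox [Fintype ι] : Bornology.IsBounded (nonnegBox b) := by
  rw [nonnegBox_eq_preimage]
  exact (EuclideanSpace.equiv ι ℝ).antilipschitz.isBounded_preimage (Metric.isBounded_Icc _ _)

end NonnegBox

def IsWeakDRSubmodularOn {ι : Type*} [Fintype ι] (γ : ℝ) (f : EuclideanSpace ℝ ι → ℝ)
    (X : Set (EuclideanSpace ℝ ι)) : Prop :=
  ∀ x ∈ X, ∀ y ∈ X, (∀ i, x i ≤ y i) → ∀ i, γ * gradient f y i ≤ gradient f x i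

namespace IsWeakDRSubmodularOn

variable {ι : Type*} [Fintype ι] {γ : ℝ} {f : EuclideanSpace ℝ ι → ℝ}
  {X : Set (EuclideanSpace ℝ ι)} {x y : EuclideanSpace ℝ ι}

theorem mul_sub_le_inner_gradient_left (hf : IsWeakDRSubmodularOn γ f X)
    (hdiff : Differentiable ℝ f) (hxy : ∀ i, x i ≤ y i) (hX : segment ℝ x y ⊆ X) :
    γ * (f y - f x) ≤ ⟪gradient f x, y - x⟫_ℝ := by
  obtain ⟨z, hz, hfz⟩ := exists_mem_segment_sub_eq_inner_gradient hdiff x y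
  rw [hfz]
  refine EuclideanSpace.mul_inner_le_inner_of_forall_mul_le ?_ fun i => sub_nonneg.2 (hxy i)
  exact hf x (hX (left_mem_segment ℝ x y)) z (hX hz) fun i =>
    (EuclideanSpace.apply_mem_Icc_of_mem_segment hz (hxy i)).1

theorem mul_inner_gradient_right_le_sub (hf : IsWeakDRSubmodularOn γ f X)
    (hdiff : Differentiable ℝ f) (hxy : ∀ i, x i ≤ y i) (hX : segment ℝ x y ⊆ X) :
    γ * ⟪gradient f y, y - x⟫_ℝ ≤ f y - f x := by
  obtain ⟨z, hz, hfz⟩ := exists_mem_segment_sub_eq_inner_gradient hdiff x y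
  rw [hfz]
  refine EuclideanSpace.mul_inner_le_inner_of_forall_mul_le ?_ fun i => sub_nonneg.2 (hxy i)
  exact hf z (hX hz) y (hX (right_mem_segment ℝ x y)) fun i =>
    (EuclideanSpace.apply_mem_Icc_of_mem_segment hz (hxy i)).2

theorem sq_mul_sub_le_mul_inner_gradient {b : EuclideanSpace ℝ ι}
    (hf : IsWeakDRSubmodularOn γ f (nonnegBox b)) (hγ : 0 ≤ γ) (hdiff : Differentiable ℝ f)
    (hnonneg : ∀ x ∈ nonnegBox b, 0 ≤ f x)
    (hmono : ∀ x ∈ nonnegBox b, ∀ y ∈ nonnegBox b, (∀ i, x i ≤ y i) → f x ≤ f y)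
    (hx : x ∈ nonnegBox b) (hy : y ∈ nonnegBox b) :
    γ ^ 2 * f y - (γ ^ 2 + 1) * f x ≤ γ * ⟪gradient f x, y - x⟫_ℝ := by
  set u : EuclideanSpace ℝ ι := WithLp.toLp 2 (x.ofLp ⊔ y.ofLp)
  set l : EuclideanSpace ℝ ι := WithLp.toLp 2 (x.ofLp ⊓ y.ofLp)
  have hu : u ∈ nonnegBox b := fun i =>
    ⟨(hx i).1.trans le_sup_left, sup_le (hx i).2 (hy i).2⟩
  have hl : l ∈ nonnegBox b := fun i =>
    ⟨le_inf (hx i).1 (hy i).1, inf_le_left.trans (hx i).2⟩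
  have hup := hf.mul_sub_le_inner_gradient_left hdiff (fun i => le_sup_left (b := y i))
    ((convex_nonnegBox b).segment_subset hx hu)
  have hdown := hf.mul_inner_gradient_right_le_sub hdiff (fun i => inf_le_left (b := y i))
    ((convex_nonnegBox b).segment_subset hl hx)
  have hfyu : f y ≤ f u := hmono y hy u hu fun i => le_sup_right
  have hsplit : y - x = (u - x) - (x - l) := by
    ext i
    simp only [PiLp.sub_apply, u, l, Pi.sup_apply, Pi.inf_apply]
    linarith [max_add_min (x i) (y i)]
  rw [hsplit, inner_sub_right]
  nlinarith [mul_le_mul_of_nonneg_left hup hγ, hnonneg l hl,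
    mul_le_mul_of_nonneg_left hfyu (sq_nonneg γ)]

end IsWeakDRSubmodularOn

theorem sum_Icc_sub_mul_le {a c : ℕ → ℝ} {M : ℝ} {T : ℕ} (hT : 1 ≤ T)
    (ha : ∀ t ∈ Icc 1 T, a t ≤ M) (hc₁ : 0 ≤ c 1) (hc : ∀ t ∈ Ico 1 T, c t ≤ c (t + 1)) :
    ∑ t ∈ Icc 1 T, (a t - a (t + 1)) * c t ≤ (M - a (T + 1)) * c T := by
  induction T, hT using Nat.le_induction with
  | base => simpa using mul_le_mul_of_nonneg_right (sub_le_sub_right (ha 1 (by simp)) _) hc₁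
  | succ T hT ih =>
    have ih := ih (fun t ht => ha t (Icc_subset_Icc_right T.le_succ ht))
      (fun t ht => hc t (Ico_subset_Ico_right T.le_succ ht))
    have haT : a (T + 1) ≤ M := ha (T + 1) (by simp)
    have hcT : c T ≤ c (T + 1) := hc T (mem_Ico.2 ⟨hT, T.lt_succ_self⟩)
    rw [sum_Icc_succ_top (by omega)]
    nlinarith [mul_le_mul_of_nonneg_left hcT (sub_nonneg.2 haT)]

theorem sum_Icc_inv_sqrt_le (T : ℕ) : ∑ t ∈ Icc 1 T, (√t)⁻¹ ≤ 2 * √T := by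
  induction T with
  | zero => simp
  | succ T ih =>
    rw [sum_Icc_succ_top (by omega)]
    have hT : (0 : ℝ) < √(T + 1 : ℕ) := Real.sqrt_pos.2 (by positivity)
    have hsq : √(T + 1 : ℕ) ^ 2 = √T ^ 2 + 1 := by simp [Real.sq_sqrt, add_nonneg]
    have hstep : (√(T + 1 : ℕ))⁻¹ ≤ 2 * (√(T + 1 : ℕ) - √T) := by
      rw [inv_le_iff_one_le_mul₀ hT]
      nlinarith [Real.sqrt_nonneg T, Real.sqrt_le_sqrt (Nat.cast_le.2 T.le_succ)]
    linarith

section OnlineGradient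

variable {E : Type*} [NormedAddCommGroup E] [InnerProductSpace ℝ E]

theorem norm_sub_le_norm_sub_of_forall_norm_sub_le {K : Set E} (hK : Convex ℝ K) {z p u : E}
    (hp : p ∈ K) (hu : u ∈ K) (hmin : ∀ v ∈ K, ‖z - p‖ ≤ ‖z - v‖) : ‖p - u‖ ≤ ‖z - u‖ := by
  have : Nonempty K := ⟨⟨p, hp⟩⟩
  have hinf : ‖z - p‖ = ⨅ v : K, ‖z - v‖ :=
    le_antisymm (le_ciInf fun v => hmin v v.2) (ciInf_le (f := fun v : K => ‖z - v‖)
      ⟨0, Set.forall_mem_range.2 fun _ => norm_nonneg _⟩ ⟨p, hp⟩)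
  have hobtuse : ⟪z - p, u - p⟫_ℝ ≤ 0 := (norm_eq_iInf_iff_real_inner_le_zero hK hp).1 hinf u hu
  have hexpand : ‖z - u‖ ^ 2 = ‖z - p‖ ^ 2 - 2 * ⟪z - p, u - p⟫_ℝ + ‖p - u‖ ^ 2 := by
    rw [show z - u = (z - p) - (u - p) by abel, norm_sub_sq_real, norm_sub_rev u p]
  refine le_of_sq_le_sq ?_ (norm_nonneg _)
  nlinarith [norm_nonneg (z - p)]

theorem inner_sub_le_of_norm_sub_le {g x x' u : E} {η : ℝ} (hη : 0 < η)
    (h : ‖x' - u‖ ≤ ‖x + η • g - u‖) :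
    ⟪g, u - x⟫_ℝ ≤ (‖x - u‖ ^ 2 - ‖x' - u‖ ^ 2) / (2 * η) + η / 2 * ‖g‖ ^ 2 := by
  have hexpand : ‖x + η • g - u‖ ^ 2 = ‖x - u‖ ^ 2 - 2 * η * ⟪g, u - x⟫_ℝ + η ^ 2 * ‖g‖ ^ 2 := by
    rw [show x + η • g - u = (x - u) + η • g by abel, norm_add_sq_real, norm_smul,
      real_inner_smul_right, Real.norm_eq_abs, abs_of_pos hη, real_inner_comm,
      ← neg_sub u x, inner_neg_right, norm_neg]
    ring
  rw [div_add' _ _ _ (by positivity), le_div_iff₀ (by positivity)]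
  nlinarith [pow_le_pow_left₀ (norm_nonneg _) h 2]

variable {K : Set E} {T : ℕ} {D G : ℝ} {η : ℕ → ℝ} {g x : ℕ → E} {u : E}

theorem sum_inner_sub_le_of_projected_gradient_steps (hK : Convex ℝ K) (hu : u ∈ K) (hT : 1 ≤ T)
    (hη : ∀ t ∈ Icc 1 T, 0 < η t) (hη_anti : ∀ t ∈ Ico 1 T, η (t + 1) ≤ η t)
    (hdist : ∀ t ∈ Icc 1 T, ‖x t - u‖ ≤ D) (hg : ∀ t ∈ Icc 1 T, ‖g t‖ ≤ G)
    (hstep : ∀ t ∈ Icc 1 T, x (t + 1) ∈ K ∧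
      ∀ v ∈ K, ‖x t + η t • g t - x (t + 1)‖ ≤ ‖x t + η t • g t - v‖) :
    ∑ t ∈ Icc 1 T, ⟪g t, u - x t⟫_ℝ ≤ D ^ 2 / (2 * η T) + G ^ 2 / 2 * ∑ t ∈ Icc 1 T, η t := by
  set a : ℕ → ℝ := fun t => ‖x t - u‖ ^ 2
  have hone : ∀ t ∈ Icc 1 T,
      ⟪g t, u - x t⟫_ℝ ≤ (a t - a (t + 1)) * (2 * η t)⁻¹ + G ^ 2 / 2 * η t := by
    intro t ht
    have hproj := norm_sub_le_norm_sub_of_forall_norm_sub_le hK (hstep t ht).1 hu (hstep t ht).2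
    have hgG : ‖g t‖ ^ 2 ≤ G ^ 2 := pow_le_pow_left₀ (norm_nonneg _) (hg t ht) 2
    have := inner_sub_le_of_norm_sub_le (hη t ht) hproj
    rw [div_eq_mul_inv] at this
    nlinarith [(hη t ht).le]
  have hη_mem : ∀ t ∈ Ico 1 T, t + 1 ∈ Icc 1 T := fun t ht => by
    simp only [mem_Icc, mem_Ico] at ht ⊢; omega
  have htelescope := sum_Icc_sub_mul_le (M := D ^ 2) (a := a) (c := fun t => (2 * η t)⁻¹) hT
    (fun t ht => pow_le_pow_left₀ (norm_nonneg _) (hdist t ht) 2)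
    (inv_nonneg.2 (by linarith [hη 1 (by simp [hT])]))
    (fun t ht => inv_anti₀ (by linarith [hη _ (hη_mem t ht)]) (by linarith [hη_anti t ht]))
  calc ∑ t ∈ Icc 1 T, ⟪g t, u - x t⟫_ℝ
      ≤ ∑ t ∈ Icc 1 T, ((a t - a (t + 1)) * (2 * η t)⁻¹ + G ^ 2 / 2 * η t) := sum_le_sum hone
    _ = ∑ t ∈ Icc 1 T, (a t - a (t + 1)) * (2 * η t)⁻¹ + G ^ 2 / 2 * ∑ t ∈ Icc 1 T, η t := by
      rw [sum_add_distrib, mul_sum]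
    _ ≤ D ^ 2 / (2 * η T) + G ^ 2 / 2 * ∑ t ∈ Icc 1 T, η t := by
      have hlast : 0 ≤ a (T + 1) * (2 * η T)⁻¹ :=
        mul_nonneg (sq_nonneg _) (inv_nonneg.2 (by linarith [hη T (by simp [hT])]))
      have hsplit : (D ^ 2 - a (T + 1)) * (2 * η T)⁻¹ =
          D ^ 2 / (2 * η T) - a (T + 1) * (2 * η T)⁻¹ := by ring
      linarith

theorem sum_inner_sub_le_of_projected_gradient_steps_sqrt (hK : Convex ℝ K) (hu : u ∈ K)
    (hT : 1 ≤ T) (hG : 0 < G) (hη : ∀ t, η t = D / (G * √t))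
    (hdist : ∀ t ∈ Icc 1 T, ‖x t - u‖ ≤ D) (hg : ∀ t ∈ Icc 1 T, ‖g t‖ ≤ G)
    (hstep : ∀ t ∈ Icc 1 T, x (t + 1) ∈ K ∧
      ∀ v ∈ K, ‖x t + η t • g t - x (t + 1)‖ ≤ ‖x t + η t • g t - v‖) :
    ∑ t ∈ Icc 1 T, ⟪g t, u - x t⟫_ℝ ≤ 3 / 2 * (D * G * √T) := by
  have hD : 0 ≤ D := (norm_nonneg _).trans (hdist 1 (by simp [hT]))
  rcases hD.eq_or_lt with rfl | hD
  · -- the step sizes vanish, and so does every `x t - u`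
    have hx : ∀ t ∈ Icc 1 T, x t = u := fun t ht =>
      sub_eq_zero.1 (norm_le_zero_iff.1 (hdist t ht))
    rw [sum_eq_zero fun t ht => by rw [hx t ht, sub_self, inner_zero_right]]
    simp
  have hsqrt : ∀ t ∈ Icc 1 T, 0 < √(t : ℝ) := fun t ht =>
    Real.sqrt_pos.2 (Nat.cast_pos.2 (by simp only [mem_Icc] at ht; omega))
  have hbound := sum_inner_sub_le_of_projected_gradient_steps hK hu hT
    (fun t ht => by rw [hη]; have := hsqrt t ht; positivity)
    (fun t ht => by
      rw [hη, hη]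
      gcongr
      · exact mul_pos hG (hsqrt t (Ico_subset_Icc_self ht))
      · exact_mod_cast t.le_succ)
    hdist hg hstep
  have hηsum : ∑ t ∈ Icc 1 T, η t = D / G * ∑ t ∈ Icc 1 T, (√t)⁻¹ := by
    rw [mul_sum]
    exact sum_congr rfl fun t _ => by rw [hη]; field_simp
  have hηT : D ^ 2 / (2 * η T) = D * G * √T / 2 := by
    have := hsqrt T (by simp [hT])
    rw [hη]; field_simp
  have := mul_le_mul_of_nonneg_left (sum_Icc_inv_sqrt_le T) (by positivity : 0 ≤ G ^ 2 / 2 * (D / G))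
  rw [hηsum, hηT] at hbound
  have hG2 : G ^ 2 / 2 * (D / G) * (2 * √T) = D * G * √T := by field_simp
  linarith

end OnlineGradient

theorem online_gradient_ascent_weakly_dr_regret_general
    {n : ℕ} (T : ℕ) (hT : 1 ≤ T)
    (b : EuclideanSpace ℝ (Fin n))
    (X : Set (EuclideanSpace ℝ (Fin n)))
    (hX : X = {y : EuclideanSpace ℝ (Fin n) | ∀ i, y i ∈ Set.Icc 0 (b i)})
    (P : Set (EuclideanSpace ℝ (Fin n)))
    (hPX : P ⊆ X) (hPconvex : Convex ℝ P)
    (D G γ : ℝ) (hD : Metric.diam P = D) (hG : 0 < G) (hγ : γ ∈ Set.Ioc (0 : ℝ) 1)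
    (f : ℕ → EuclideanSpace ℝ (Fin n) → ℝ)
    (hdiff : ∀ t, Differentiable ℝ (f t))
    (hnonneg : ∀ t, ∀ x ∈ X, 0 ≤ f t x)
    (hmono : ∀ t, ∀ x ∈ X, ∀ y ∈ X, (∀ i, x i ≤ y i) → f t x ≤ f t y)
    (hweakDR : ∀ t, ∀ x ∈ X, ∀ y ∈ X, (∀ i, x i ≤ y i) →
      ∀ i, γ * gradient (f t) y i ≤ gradient (f t) x i)
    (hgradbound : ∀ t ∈ Finset.Icc 1 T, ∀ x ∈ P, ‖gradient (f t) x‖ ≤ G)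
    (η : ℕ → ℝ) (hη : ∀ t, η t = D / (G * Real.sqrt t))
    (x : ℕ → EuclideanSpace ℝ (Fin n)) (hx1 : x 1 ∈ P)
    (hupdate : ∀ t ∈ Finset.Icc 1 T,
      x (t + 1) ∈ P ∧
      ∀ v ∈ P, ‖x t + η t • gradient (f t) (x t) - x (t + 1)‖ ≤
        ‖x t + η t • gradient (f t) (x t) - v‖)
    (xstar : EuclideanSpace ℝ (Fin n)) (hxstar : xstar ∈ P) :
    γ ^ 2 / (γ ^ 2 + 1) * ∑ t ∈ Finset.Icc 1 T, f t xstar -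
        ∑ t ∈ Finset.Icc 1 T, f t (x t) ≤
      3 * γ * D * G * Real.sqrt T / (2 * (γ ^ 2 + 1)) := by
  subst hX
  obtain ⟨hγ0, -⟩ := hγ
  have hxP : ∀ t ∈ Icc 1 T, x t ∈ P := by
    rintro (_ | _ | s) ht
    · simp at ht
    · exact hx1
    · exact (hupdate (s + 1) (by simp only [mem_Icc] at ht ⊢; omega)).1
  have hdist : ∀ t ∈ Icc 1 T, ‖x t - xstar‖ ≤ D := fun t ht => by
    rw [← dist_eq_norm, ← hD]
    exact Metric.dist_le_diam_of_mem ((isBounded_nonnegBox b).subset hPX) (hxP t ht) hxstar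
  have hregret := sum_inner_sub_le_of_projected_gradient_steps_sqrt
    (g := fun t => gradient (f t) (x t)) hPconvex hxstar hT hG hη hdist
    (fun t ht => hgradbound t ht _ (hxP t ht)) hupdate
  have hkey : ∀ t ∈ Icc 1 T, γ ^ 2 * f t xstar - (γ ^ 2 + 1) * f t (x t) ≤
      γ * ⟪gradient (f t) (x t), xstar - x t⟫_ℝ := fun t ht =>
    IsWeakDRSubmodularOn.sq_mul_sub_le_mul_inner_gradient (hweakDR t) hγ0.le (hdiff t)
      (hnonneg t) (hmono t) (hPX (hxP t ht)) (hPX hxstar)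
  have hsum := sum_le_sum hkey
  rw [sum_sub_distrib, ← mul_sum, ← mul_sum, ← mul_sum] at hsum
  calc γ ^ 2 / (γ ^ 2 + 1) * ∑ t ∈ Icc 1 T, f t xstar - ∑ t ∈ Icc 1 T, f t (x t)
      = (γ ^ 2 * ∑ t ∈ Icc 1 T, f t xstar - (γ ^ 2 + 1) * ∑ t ∈ Icc 1 T, f t (x t)) /
          (γ ^ 2 + 1) := by field_simp
    _ ≤ γ * (3 / 2 * (D * G * √T)) / (γ ^ 2 + 1) := by
      gcongr
      linarith [mul_le_mul_of_nonneg_left hregret hγ0.le]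
    _ = 3 * γ * D * G * √T / (2 * (γ ^ 2 + 1)) := by field_simp

/-- Online (projected) gradient ascent regret bound for monotone γ-weakly
DR-submodular functions:
`(γ²/(γ²+1)) Σ f_t(x*) - Σ f_t(x_t) ≤ 3γDG√T / (2(γ²+1))`. -/
theorem online_gradient_ascent_weakly_dr_regret
    {n : ℕ} (T : ℕ) (hT : 1 ≤ T)
    (b : EuclideanSpace ℝ (Fin n)) (hb : ∀ i, 0 ≤ b i)
    (X : Set (EuclideanSpace ℝ (Fin n)))
    (hX : X = {y : EuclideanSpace ℝ (Fin n) | ∀ i, y i ∈ Set.Icc 0 (b i)})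
    (P : Set (EuclideanSpace ℝ (Fin n)))
    (hPX : P ⊆ X) (hPne : P.Nonempty) (hPclosed : IsClosed P) (hPconvex : Convex ℝ P)
    (D G γ : ℝ) (hD : Metric.diam P = D) (hG : 0 < G) (hγ : γ ∈ Set.Ioc (0 : ℝ) 1)
    (f : ℕ → EuclideanSpace ℝ (Fin n) → ℝ)
    (hdiff : ∀ t, Differentiable ℝ (f t))
    (hnonneg : ∀ t, ∀ x ∈ X, 0 ≤ f t x)
    (hmono : ∀ t, ∀ x ∈ X, ∀ y ∈ X, (∀ i, x i ≤ y i) → f t x ≤ f t y)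
    (hweakDR : ∀ t, ∀ x ∈ X, ∀ y ∈ X, (∀ i, x i ≤ y i) →
      ∀ i, γ * gradient (f t) y i ≤ gradient (f t) x i)
    (hgradbound : ∀ t ∈ Finset.Icc 1 T, ∀ x ∈ P, ‖gradient (f t) x‖ ≤ G)
    (η : ℕ → ℝ) (hη : ∀ t, η t = D / (G * Real.sqrt t))
    (x : ℕ → EuclideanSpace ℝ (Fin n)) (hx1 : x 1 ∈ P)
    (hupdate : ∀ t ∈ Finset.Icc 1 T,
      x (t + 1) ∈ P ∧
      ∀ v ∈ P, ‖x t + η t • gradient (f t) (x t) - x (t + 1)‖ ≤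
        ‖x t + η t • gradient (f t) (x t) - v‖)
    (xstar : EuclideanSpace ℝ (Fin n)) (hxstar : xstar ∈ P)
    (hopt : ∀ y ∈ P, ∑ t ∈ Finset.Icc 1 T, f t y ≤ ∑ t ∈ Finset.Icc 1 T, f t xstar) :
    γ ^ 2 / (γ ^ 2 + 1) * ∑ t ∈ Finset.Icc 1 T, f t xstar -
        ∑ t ∈ Finset.Icc 1 T, f t (x t) ≤
      3 * γ * D * G * Real.sqrt T / (2 * (γ ^ 2 + 1)) :=
  online_gradient_ascent_weakly_dr_regret_general T hT b X hX P hPX hPconvex D G γ hD hG hγ f hdiff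
    hnonneg hmono hweakDR hgradbound η hη x hx1 hupdate xstar hxstar
end
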